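/- arXiv:2203.05102 — 6 statements merged into one kernel-verified Lean document; each statement's English description precedes it below -/
import Mathlib

section
/- For all integers N2 > N1 ≥ 1 and T ≥ N1 + N2, the rational number min(R1, R2) is strictly greater than (T+1−N1−N2)/(T+1−N1), where R1 = (T+1−N1−N2)/(T+1−N2) and R2 = (T+1−N2)/(T+1+Σ_{i=0}^{N1} (N1−i)/(T+1−N2−(N1−i))). -/
/-!
Put `a = T + 1 - N1 - N2 ≥ 1`, so that `R1 = a / (a + N1)`, the bound is `a / (a + N2)`,
`R2 = (a + N1) / (a + N1 + N2 + S)` and `S = ∑_{i ≤ N1} (N1 - i) / (a + i)`.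
The bound `R1 > a / (a + N2)` is `N1 < N2`. Cross-multiplying, `R2 > a / (a + N2)` is `a S < N1 N2`,
and bounding each denominator of `S` below by `a` gives `a S ≤ N1 (N1 + 1) / 2 < N1 N2`.
-/

open Finset

variable {K : Type*} [Field K] [LinearOrder K] [IsStrictOrderedRing K]

lemma sum_range_succ_natCast_sub (n : ℕ) :
    ∑ i ∈ range (n + 1), ((n : K) - i) = n * (n + 1) / 2 := by
  have gauss := congrArg (Nat.cast : ℕ → K) (sum_range_id_mul_two (n + 1))
  push_cast at gauss
  rw [sum_sub_distrib, sum_const, card_range, nsmul_eq_mul]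
  push_cast
  linarith

lemma natCast_le_of_mem_range_succ {n i : ℕ} (hi : i ∈ range (n + 1)) : (i : K) ≤ n :=
  Nat.cast_le.2 (Nat.lt_succ_iff.1 (mem_range.1 hi))

lemma sum_range_sub_div_add_nonneg {a : K} (ha : 0 ≤ a) (n : ℕ) :
    0 ≤ ∑ i ∈ range (n + 1), ((n : K) - i) / (a + i) :=
  sum_nonneg fun _ hi => div_nonneg (sub_nonneg.2 (natCast_le_of_mem_range_succ hi)) (by positivity)

lemma mul_sum_range_sub_div_add_le {a : K} (ha : 0 < a) (n : ℕ) :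
    a * ∑ i ∈ range (n + 1), ((n : K) - i) / (a + i) ≤ n * (n + 1) / 2 := by
  rw [← sum_range_succ_natCast_sub, mul_sum]
  refine sum_le_sum fun i hi => ?_
  have hin : (i : K) ≤ n := natCast_le_of_mem_range_succ hi
  rw [mul_div_assoc', div_le_iff₀ (by positivity)]
  nlinarith

lemma div_add_lt_div_add_add_add {a n m S : K} (ha : 0 < a) (hn : 0 ≤ n) (hm : 0 ≤ m)
    (hS : 0 ≤ S) (h : a * S < n * m) : a / (a + m) < (a + n) / (a + n + m + S) := by
  rw [div_lt_div_iff₀ (by positivity) (by positivity)]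
  linear_combination h

theorem stmt_2 (N1 N2 T : ℕ) (hN1 : 1 ≤ N1) (hN12 : N1 < N2) (hT : N1 + N2 ≤ T) :
    min (((T : ℚ) + 1 - N1 - N2) / ((T : ℚ) + 1 - N2))
      (((T : ℚ) + 1 - N2) /
        ((T : ℚ) + 1 + ∑ i ∈ Finset.range (N1 + 1),
          ((N1 : ℚ) - i) / ((T : ℚ) + 1 - N2 - ((N1 : ℚ) - i)))) >
    ((T : ℚ) + 1 - N1 - N2) / ((T : ℚ) + 1 - N1) := by
  have hN1' : (1 : ℚ) ≤ N1 := by exact_mod_cast hN1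
  have hN12' : (N1 : ℚ) + 1 ≤ N2 := by exact_mod_cast hN12
  have hT' : (N1 : ℚ) + N2 ≤ T := by exact_mod_cast hT
  set a : ℚ := T + 1 - N1 - N2 with ha_def
  have ha : 0 < a := by linarith
  rw [sum_congr rfl fun (i : ℕ) _ => show ((N1 : ℚ) - i) / (T + 1 - N2 - (N1 - i)) = (N1 - i) / (a + i)
    by rw [ha_def]; ring]
  have hS := mul_sum_range_sub_div_add_le ha N1
  have hgauss : (N1 : ℚ) * (N1 + 1) / 2 < N1 * N2 := by nlinarith
  rw [show (T : ℚ) + 1 - N2 = a + N1 by ring, show (T : ℚ) + 1 - N1 = a + N2 by ring,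
    show ∀ S, (T : ℚ) + 1 + S = a + N1 + N2 + S by intro; ring]
  refine lt_min (div_lt_div_of_pos_left ha (by positivity) (by linarith)) ?_
  exact div_add_lt_div_add_add_add ha (by positivity) (by positivity)
    (sum_range_sub_div_add_nonneg ha.le N1) (hS.trans_lt hgauss)
end

section
/- For all integers N ≥ 1 and T ≥ 2N, taking N1 = N2 = N one has min(R1, R2) = (T+1−2N)/(T+1−N); that is, R1 = (T+1−2N)/(T+1−N) and R2 ≥ R1, where R1 = (T+1−N1−N2)/(T+1−N2) and R2 = (T+1−N2)/(T+1+Σ_{i=0}^{N1} (N1−i)/(T+1−N2−(N1−i))). -/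
/-!
Write D = T + 1 - 2N > 0. The i-th summand of the sum S in R₂ is (N - i)/(D + i) ≤ (N - i)/D,
so D·S ≤ N(N+1)/2 ≤ N². Since R₁ = D/(D + N) and R₂ = (D + N)/(D + 2N + S), cross-multiplying
turns R₁ ≤ R₂ into D·S ≤ N².
-/

open Finset

section
variable {K : Type*} [Field K] [LinearOrder K] [IsStrictOrderedRing K]

lemma natCast_sub_natCast_nonneg_of_mem_range_succ {n i : ℕ} (hi : i ∈ range (n + 1)) :
    0 ≤ (n : K) - i :=
  sub_nonneg.mpr (by exact_mod_cast Nat.lt_succ_iff.mp (mem_range.mp hi))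

lemma sum_sub_div_add_nonneg {d : K} (hd : 0 < d) (n : ℕ) :
    0 ≤ ∑ i ∈ range (n + 1), ((n : K) - i) / (d + i) :=
  sum_nonneg fun _ hi =>
    div_nonneg (natCast_sub_natCast_nonneg_of_mem_range_succ hi) (by positivity)

lemma mul_sum_sub_div_add_le_sq {d : K} (hd : 0 < d) (n : ℕ) :
    d * ∑ i ∈ range (n + 1), ((n : K) - i) / (d + i) ≤ n ^ 2 := by
  have termwise : ∀ i ∈ range (n + 1), ((n : K) - i) / (d + i) ≤ ((n : K) - i) / d :=
    fun _ hi => div_le_div_of_nonneg_left (natCast_sub_natCast_nonneg_of_mem_range_succ hi) hd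
      (le_add_of_nonneg_right (Nat.cast_nonneg _))
  calc d * ∑ i ∈ range (n + 1), ((n : K) - i) / (d + i)
      ≤ d * ∑ i ∈ range (n + 1), ((n : K) - i) / d :=
        mul_le_mul_of_nonneg_left (sum_le_sum termwise) hd.le
    _ = n * (n + 1) / 2 := by rw [← sum_div, sum_range_succ_natCast_sub]; field_simp
    _ ≤ n ^ 2 := by
      have : (n : K) ≤ n ^ 2 := by exact_mod_cast Nat.le_self_pow two_ne_zero n
      linarith

lemma div_add_le_div_add_two_mul_add {d n s : K} (hd : 0 < d) (hn : 0 ≤ n) (hs : 0 ≤ s)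
    (h : d * s ≤ n ^ 2) : d / (d + n) ≤ (d + n) / (d + 2 * n + s) := by
  rw [div_le_div_iff₀ (by positivity) (by positivity)]
  nlinarith

end

theorem stmt_3_general (N T : ℕ) (hT : 2 * N ≤ T) :
    ((T : ℚ) + 1 - N - N) / ((T : ℚ) + 1 - N) = ((T : ℚ) + 1 - 2 * N) / ((T : ℚ) + 1 - N) ∧
    ((T : ℚ) + 1 - N) /
        ((T : ℚ) + 1 + ∑ i ∈ Finset.range (N + 1),
          ((N : ℚ) - i) / ((T : ℚ) + 1 - N - ((N : ℚ) - i))) ≥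
      ((T : ℚ) + 1 - N - N) / ((T : ℚ) + 1 - N) ∧
    min (((T : ℚ) + 1 - N - N) / ((T : ℚ) + 1 - N))
      (((T : ℚ) + 1 - N) /
        ((T : ℚ) + 1 + ∑ i ∈ Finset.range (N + 1),
          ((N : ℚ) - i) / ((T : ℚ) + 1 - N - ((N : ℚ) - i)))) =
      ((T : ℚ) + 1 - 2 * N) / ((T : ℚ) + 1 - N) := by
  have hd : (0 : ℚ) < T + 1 - 2 * N := by
    have : (2 * N : ℚ) ≤ T := by exact_mod_cast hT
    linarith
  have hS : ∑ i ∈ range (N + 1), ((N : ℚ) - i) / ((T : ℚ) + 1 - N - ((N : ℚ) - i)) =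
      ∑ i ∈ range (N + 1), ((N : ℚ) - i) / (((T : ℚ) + 1 - 2 * N) + i) :=
    sum_congr rfl fun i _ => by ring_nf
  have hR : ((T : ℚ) + 1 - N - N) / ((T : ℚ) + 1 - N) ≤
      ((T : ℚ) + 1 - N) / ((T : ℚ) + 1 + ∑ i ∈ range (N + 1),
        ((N : ℚ) - i) / ((T : ℚ) + 1 - N - ((N : ℚ) - i))) := by
    rw [hS]
    calc ((T : ℚ) + 1 - N - N) / ((T : ℚ) + 1 - N)
        = ((T : ℚ) + 1 - 2 * N) / (((T : ℚ) + 1 - 2 * N) + N) := by ring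
      _ ≤ (((T : ℚ) + 1 - 2 * N) + N) / (((T : ℚ) + 1 - 2 * N) + 2 * N +
            ∑ i ∈ range (N + 1), ((N : ℚ) - i) / (((T : ℚ) + 1 - 2 * N) + i)) :=
        div_add_le_div_add_two_mul_add hd (Nat.cast_nonneg N) (sum_sub_div_add_nonneg hd N)
          (mul_sum_sub_div_add_le_sq hd N)
      _ = _ := by ring
  refine ⟨by ring, hR, ?_⟩
  rw [min_eq_left hR]
  ring

theorem stmt_3 (N T : ℕ) (hN : 1 ≤ N) (hT : 2 * N ≤ T) :
    ((T : ℚ) + 1 - N - N) / ((T : ℚ) + 1 - N) = ((T : ℚ) + 1 - 2 * N) / ((T : ℚ) + 1 - N) ∧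
    ((T : ℚ) + 1 - N) /
        ((T : ℚ) + 1 + ∑ i ∈ Finset.range (N + 1),
          ((N : ℚ) - i) / ((T : ℚ) + 1 - N - ((N : ℚ) - i))) ≥
      ((T : ℚ) + 1 - N - N) / ((T : ℚ) + 1 - N) ∧
    min (((T : ℚ) + 1 - N - N) / ((T : ℚ) + 1 - N))
      (((T : ℚ) + 1 - N) /
        ((T : ℚ) + 1 + ∑ i ∈ Finset.range (N + 1),
          ((N : ℚ) - i) / ((T : ℚ) + 1 - N - ((N : ℚ) - i)))) =
      ((T : ℚ) + 1 - 2 * N) / ((T : ℚ) + 1 - N) :=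
  stmt_3_general N T hT
end

section
/- For all integers N1 ≥ 1, N2 ≥ 1, T ≥ N1+N2, with k = ∏_{i=0}^{N1} (T+1−N2−i), n1 = (T+1−N2)·∏_{i=0}^{N1−1} (T+1−N2−i), and n2 = (T+1−N1)·∏_{i=1}^{N1} (T+1−N2−i) + Σ_{l=1}^{N1} ∏_{i∈{0,…,N1}, i≠l} (T+1−N2−i), the following two identities of rational numbers hold: k/n1 = (T+1−N1−N2)/(T+1−N2) and k/n2 = (T+1−N2)/(T+1+Σ_{i=0}^{N1} (N1−i)/(T+1−N2−(N1−i))). -/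
/-!
Write `a = T + 1 - N2` and `k = ∏_{i=0}^{N1} (a - i)`. The first identity is the cancellation of
`∏_{i<N1} (a - i)`. For the second, every summand of `n2` is `k / (a - l)` and
`∏_{i=1}^{N1} (a - i) = k / a`, so `n2 = k (c / a + ∑_{l=1}^{N1} 1 / (a - l))` with `c = T + 1 - N1`.
Multiplying through by `a` and using `a / (a - l) = 1 + l / (a - l)` turns the bracket into
`T + 1 + ∑_{l=0}^{N1} l / (a - l)`, which is the stated sum read backwards.
-/

open Finset

section

variable {F : Type*} [Field F]

theorem prod_range_succ_div_mul_prod_range (f : ℕ → F) (m : ℕ) (c : F)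
    (h : ∏ i ∈ range m, f i ≠ 0) :
    (∏ i ∈ range (m + 1), f i) / (c * ∏ i ∈ range m, f i) = f m / c := by
  rw [prod_range_succ, mul_comm c, mul_div_mul_left _ _ h]

theorem sum_prod_erase_eq_prod_mul_sum_inv (f : ℕ → F) {s t : Finset ℕ} (hts : t ⊆ s)
    (hf : ∀ l ∈ t, f l ≠ 0) :
    ∑ l ∈ t, ∏ i ∈ s.erase l, f i = (∏ i ∈ s, f i) * ∑ l ∈ t, (f l)⁻¹ := by
  rw [mul_sum]
  refine sum_congr rfl fun l hl => ?_
  rw [← div_eq_mul_inv, eq_div_iff (hf l hl), mul_comm, mul_prod_erase s f (hts hl)]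

theorem sum_range_succ_comp_natCast_sub {M : Type*} [AddCommMonoid M] (g : F → M) (m : ℕ) :
    ∑ i ∈ range (m + 1), g ((m : F) - i) = ∑ i ∈ range (m + 1), g i := by
  rw [← sum_range_reflect (fun i : ℕ => g i)]
  refine sum_congr rfl fun i hi => ?_
  rw [add_tsub_cancel_right, Nat.cast_sub (Nat.lt_succ_iff.mp (mem_range.mp hi))]

theorem range_succ_eq_insert_zero_Icc (m : ℕ) : range (m + 1) = insert 0 (Icc 1 m) := by
  rw [Nat.range_succ_eq_Icc_zero, ← insert_Icc_add_one_left_eq_Icc m.zero_le, zero_add]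

theorem mul_div_add_sum_Icc_inv_sub (m : ℕ) (a c : F) (ha : ∀ l ≤ m, a - l ≠ 0) :
    a * (c / a + ∑ l ∈ Icc 1 m, (a - l)⁻¹) = c + m + ∑ l ∈ range (m + 1), l / (a - l) := by
  have ha₀ : a ≠ 0 := by simpa using ha 0 m.zero_le
  have hsplit : ∀ l ≤ m, a * (a - l)⁻¹ = 1 + l / (a - l) := fun l hl => by
    field_simp [ha l hl]
    ring
  rw [range_succ_eq_insert_zero_Icc, sum_insert (by simp), mul_add, mul_div_cancel₀ _ ha₀,
    mul_sum, sum_congr rfl fun l hl => hsplit l (mem_Icc.mp hl).2, sum_add_distrib]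
  simp only [sum_const, Nat.card_Icc, add_tsub_cancel_right, nsmul_eq_mul, mul_one,
    Nat.cast_zero, sub_zero, zero_div, zero_add]
  ring

theorem prod_div_mul_prod_Icc_add_sum_prod_erase (f : ℕ → F) (m : ℕ) (a c : F)
    (hf : ∀ i ≤ m, f i = a - i) (hne : ∀ i ≤ m, f i ≠ 0) :
    (∏ i ∈ range (m + 1), f i) /
        (c * ∏ i ∈ Icc 1 m, f i + ∑ l ∈ Icc 1 m, ∏ i ∈ (range (m + 1)).erase l, f i) =
      a / (c + m + ∑ i ∈ range (m + 1), ((m : F) - i) / (a - ((m : F) - i))) := by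
  have ha : a ≠ 0 := by simpa [hf 0 m.zero_le] using hne 0 m.zero_le
  have ha' : ∀ l ≤ m, a - l ≠ 0 := fun l hl => hf l hl ▸ hne l hl
  have hK : ∏ i ∈ range (m + 1), f i ≠ 0 :=
    prod_ne_zero_iff.mpr fun i hi => hne i (Nat.lt_succ_iff.mp (mem_range.mp hi))
  have hK₀ : ∏ i ∈ range (m + 1), f i = a * ∏ i ∈ Icc 1 m, f i := by
    rw [range_succ_eq_insert_zero_Icc, prod_insert (by simp), hf 0 m.zero_le, Nat.cast_zero,
      sub_zero]
  have hden : c * ∏ i ∈ Icc 1 m, f i + ∑ l ∈ Icc 1 m, ∏ i ∈ (range (m + 1)).erase l, f i =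
      (∏ i ∈ range (m + 1), f i) * (c / a + ∑ l ∈ Icc 1 m, (a - l)⁻¹) := by
    rw [sum_prod_erase_eq_prod_mul_sum_inv f (fun l hl => by simp at hl ⊢; omega)
      (fun l hl => hne l (mem_Icc.mp hl).2), hK₀,
      sum_congr rfl fun l hl => by rw [hf l (mem_Icc.mp hl).2]]
    field_simp
  rw [hden, div_mul_cancel_left₀ hK, ← div_mul_cancel_left₀ ha,
    mul_div_add_sum_Icc_inv_sub m a c ha', sum_range_succ_comp_natCast_sub (fun x => x / (a - x))]

end

theorem stmt_4_general (N1 N2 T : ℕ) (hT : N1 + N2 ≤ T) :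
    ((∏ i ∈ Finset.range (N1 + 1), (T + 1 - N2 - i) : ℕ) : ℚ) /
        (((T + 1 - N2) * ∏ i ∈ Finset.range N1, (T + 1 - N2 - i) : ℕ) : ℚ) =
      ((T : ℚ) + 1 - N1 - N2) / ((T : ℚ) + 1 - N2) ∧
    ((∏ i ∈ Finset.range (N1 + 1), (T + 1 - N2 - i) : ℕ) : ℚ) /
        (((T + 1 - N1) * ∏ i ∈ Finset.Icc 1 N1, (T + 1 - N2 - i) +
          ∑ l ∈ Finset.Icc 1 N1, ∏ i ∈ (Finset.range (N1 + 1)).erase l, (T + 1 - N2 - i) : ℕ) : ℚ) =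
      ((T : ℚ) + 1 - N2) /
        ((T : ℚ) + 1 + ∑ i ∈ Finset.range (N1 + 1),
          ((N1 : ℚ) - i) / ((T : ℚ) + 1 - N2 - ((N1 : ℚ) - i))) := by
  have hf : ∀ i ≤ N1, ((T + 1 - N2 - i : ℕ) : ℚ) = (T + 1 - N2 : ℚ) - i := fun i hi => by
    rw [Nat.sub_sub, Nat.cast_sub (by omega)]
    push_cast
    ring
  have hne : ∀ i ≤ N1, ((T + 1 - N2 - i : ℕ) : ℚ) ≠ 0 := fun i hi => by
    exact_mod_cast (show T + 1 - N2 - i ≠ 0 by omega)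
  have hc : ((T + 1 - N1 : ℕ) : ℚ) + N1 = T + 1 := by
    rw [Nat.cast_sub (by omega)]
    push_cast
    ring
  push_cast [Nat.cast_prod]
  constructor
  · rw [prod_range_succ_div_mul_prod_range _ _ _
      (prod_ne_zero_iff.mpr fun i hi => hne i (mem_range.mp hi).le), hf N1 le_rfl,
      show ((T + 1 - N2 : ℕ) : ℚ) = T + 1 - N2 by simpa using hf 0 N1.zero_le]
    ring
  · rw [prod_div_mul_prod_Icc_add_sum_prod_erase _ N1 ((T : ℚ) + 1 - N2) _ hf hne, hc]

theorem stmt_4 (N1 N2 T : ℕ) (hN1 : 1 ≤ N1) (hN2 : 1 ≤ N2) (hT : N1 + N2 ≤ T) :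
    ((∏ i ∈ Finset.range (N1 + 1), (T + 1 - N2 - i) : ℕ) : ℚ) /
        (((T + 1 - N2) * ∏ i ∈ Finset.range N1, (T + 1 - N2 - i) : ℕ) : ℚ) =
      ((T : ℚ) + 1 - N1 - N2) / ((T : ℚ) + 1 - N2) ∧
    ((∏ i ∈ Finset.range (N1 + 1), (T + 1 - N2 - i) : ℕ) : ℚ) /
        (((T + 1 - N1) * ∏ i ∈ Finset.Icc 1 N1, (T + 1 - N2 - i) +
          ∑ l ∈ Finset.Icc 1 N1, ∏ i ∈ (Finset.range (N1 + 1)).erase l, (T + 1 - N2 - i) : ℕ) : ℚ) =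
      ((T : ℚ) + 1 - N2) /
        ((T : ℚ) + 1 + ∑ i ∈ Finset.range (N1 + 1),
          ((N1 : ℚ) - i) / ((T : ℚ) + 1 - N2 - ((N1 : ℚ) - i))) :=
  stmt_4_general N1 N2 T hT
end

section
/- Let T, N1, N2, i*, j* be integers with T ≥ N1 + N2, N1 ≥ 1, 0 ≤ j* ≤ N1 − 1, j* ≤ i* ≤ T, and i* − j* ≤ T − N1 − N2, and let k be a positive rational. Let α : {1,…,T} → ℚ satisfy: α_i ≥ 0 for all i; Σ_{i=1}^{i*} α_i = (i* − j*)·k/(T+1−N1−N2); α_i ≤ k/(T+1−N2−j*) for all 1 ≤ i ≤ i*; and α_i ≥ k/(T−N2−j*) for all i* < i ≤ T. Then for every subset I ⊆ {1,…,T} with |{1,…,T} \setminus I| ≤ N2, one has Σ_{i∈I} α_i ≥ k. -/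
/-!
Write `D₁ = T + 1 - N₁ - N₂`, `D₂ = T + 1 - N₂ - j*`, `D₃ = T - N₂ - j*`, so that
`0 < D₁ ≤ D₃ < D₂`, and split `{1, …, T}` at `i*`. If `e` indices up to `i*` are missing
from `I`, each of weight at most `k / D₂`, then `I` keeps at least
`(i* - j*) k / D₁ - e k / D₂` there; beyond `i*` at most `N₂ - e` indices are missing, so
at least `D₃ - (i* - j*) + e` weights of size at least `k / D₃` survive. Replacing `D₁`
and `D₂` by `D₃` only lowers the total, which then collapses to exactly `k`.
-/

open Finset

theorem sum_sub_card_sdiff_nsmul_le_sum_inter {ι M : Type*} [DecidableEq ι] [AddCommGroup M]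
    [PartialOrder M] [IsOrderedAddMonoid M] {s t : Finset ι} {f : ι → M} {u : M}
    (h : ∀ i ∈ s \ t, f i ≤ u) :
    ∑ i ∈ s, f i - #(s \ t) • u ≤ ∑ i ∈ s ∩ t, f i := by
  rw [sub_le_iff_le_add, ← sum_inter_add_sum_sdiff s t f]
  exact add_le_add_right (sum_le_card_nsmul _ _ _ h) _

theorem sum_eq_sum_inter_add_sum_inter {ι M : Type*} [DecidableEq ι] [AddCommMonoid M]
    {s t u : Finset ι} (f : ι → M) (hst : Disjoint s t) (hu : u ⊆ s ∪ t) :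
    ∑ i ∈ u, f i = ∑ i ∈ s ∩ u, f i + ∑ i ∈ t ∩ u, f i := by
  rw [← sum_union (hst.mono inter_subset_left inter_subset_left), ← union_inter_distrib_right,
    inter_eq_right.mpr hu]

theorem card_union_sdiff_of_disjoint {ι : Type*} [DecidableEq ι] {s t u : Finset ι}
    (hst : Disjoint s t) : #((s ∪ t) \ u) = #(s \ u) + #(t \ u) := by
  rw [union_sdiff_distrib, card_union_of_disjoint (hst.mono sdiff_subset sdiff_subset)]

theorem Int.Icc_eq_Icc_union_Ioc {a b c : ℤ} (hab : a ≤ b + 1) (hbc : b ≤ c) :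
    Icc a c = Icc a b ∪ Ioc b c := by
  ext x
  simp only [mem_Icc, mem_Ioc, mem_union]
  omega

theorem le_mul_div_sub_mul_div_add_mul_div {K : Type*} [Field K] [LinearOrder K]
    [IsStrictOrderedRing K] {k a e m D₁ D₂ D₃ : K} (hk : 0 ≤ k) (ha : 0 ≤ a)
    (he : 0 ≤ e) (hD₁ : 0 < D₁) (hD₁₃ : D₁ ≤ D₃) (hD₃₂ : D₃ ≤ D₂) (hm : D₃ - a + e ≤ m) :
    k ≤ a * k / D₁ - e * (k / D₂) + m * (k / D₃) := by
  have hD₃ : 0 < D₃ := hD₁.trans_le hD₁₃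
  calc k = a * k / D₃ - e * (k / D₃) + (D₃ - a + e) * (k / D₃) := by
        field_simp; ring
    _ ≤ a * k / D₁ - e * (k / D₂) + m * (k / D₃) := by gcongr

theorem stmt_10_general (T N1 N2 istar jstar : ℤ) (hT : N1 + N2 ≤ T)
    (hj0 : 0 ≤ jstar) (hj1 : jstar ≤ N1 - 1) (hij : jstar ≤ istar) (hiT : istar ≤ T)
    (k : ℚ) (hk : 0 < k) (α : ℤ → ℚ)
    (hsum : ∑ i ∈ Finset.Icc (1 : ℤ) istar, α i =
      ((istar - jstar : ℤ) : ℚ) * k / ((T : ℚ) + 1 - N1 - N2))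
    (hub : ∀ i ∈ Finset.Icc (1 : ℤ) istar, α i ≤ k / ((T : ℚ) + 1 - N2 - jstar))
    (hlb : ∀ i : ℤ, istar < i → i ≤ T → α i ≥ k / ((T : ℚ) - N2 - jstar))
    (I : Finset ℤ) (hI : I ⊆ Finset.Icc (1 : ℤ) T)
    (hcard : ((Finset.Icc (1 : ℤ) T \ I).card : ℤ) ≤ N2) :
    ∑ i ∈ I, α i ≥ k := by
  have hdisj : Disjoint (Icc 1 istar) (Ioc istar T) :=
    disjoint_left.mpr fun _ hx hx' => (mem_Ioc.mp hx').1.not_ge (mem_Icc.mp hx).2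
  rw [Int.Icc_eq_Icc_union_Ioc (by omega) hiT] at hI hcard
  rw [card_union_sdiff_of_disjoint hdisj] at hcard
  have hlow := sum_sub_card_sdiff_nsmul_le_sum_inter (t := I) fun i hi =>
    hub i (mem_sdiff.mp hi).1
  have hhigh := card_nsmul_le_sum (Ioc istar T ∩ I) α _ fun i hi => by
    obtain ⟨hi, hiT⟩ := mem_Ioc.mp (mem_inter.mp hi).1
    exact hlb i hi hiT
  have hsurvivors : (#(Ioc istar T ∩ I) : ℤ) + #(Ioc istar T \ I) = T - istar := by
    rw [← Int.card_Ioc_of_le _ _ hiT, ← card_inter_add_card_sdiff (Ioc istar T) I,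
      Nat.cast_add]
  have ha : (0 : ℚ) ≤ ((istar - jstar : ℤ) : ℚ) := by exact_mod_cast sub_nonneg.mpr hij
  have hD₁ : (0 : ℚ) < T + 1 - N1 - N2 := by
    exact_mod_cast (by omega : (0 : ℤ) < T + 1 - N1 - N2)
  have hD₁₃ : (T : ℚ) + 1 - N1 - N2 ≤ T - N2 - jstar := by
    exact_mod_cast (by omega : T + 1 - N1 - N2 ≤ T - N2 - jstar)
  have hD₃₂ : (T : ℚ) - N2 - jstar ≤ T + 1 - N2 - jstar := by linarith
  have hm : (T : ℚ) - N2 - jstar - ((istar - jstar : ℤ) : ℚ) + #(Icc 1 istar \ I)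
      ≤ #(Ioc istar T ∩ I) := by
    push_cast
    exact_mod_cast (by omega :
      T - N2 - jstar - (istar - jstar) + #(Icc 1 istar \ I) ≤ #(Ioc istar T ∩ I))
  rw [hsum, nsmul_eq_mul] at hlow
  rw [nsmul_eq_mul] at hhigh
  rw [sum_eq_sum_inter_add_sum_inter α hdisj hI]
  linarith [le_mul_div_sub_mul_div_add_mul_div hk.le ha (Nat.cast_nonneg _) hD₁ hD₁₃ hD₃₂ hm]

theorem stmt_10 (T N1 N2 istar jstar : ℤ) (hT : N1 + N2 ≤ T) (hN1 : 1 ≤ N1)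
    (hj0 : 0 ≤ jstar) (hj1 : jstar ≤ N1 - 1) (hij : jstar ≤ istar) (hiT : istar ≤ T)
    (hik : istar - jstar ≤ T - N1 - N2)
    (k : ℚ) (hk : 0 < k) (α : ℤ → ℚ)
    (hα0 : ∀ i ∈ Finset.Icc (1 : ℤ) T, 0 ≤ α i)
    (hsum : ∑ i ∈ Finset.Icc (1 : ℤ) istar, α i =
      ((istar - jstar : ℤ) : ℚ) * k / ((T : ℚ) + 1 - N1 - N2))
    (hub : ∀ i ∈ Finset.Icc (1 : ℤ) istar, α i ≤ k / ((T : ℚ) + 1 - N2 - jstar))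
    (hlb : ∀ i : ℤ, istar < i → i ≤ T → α i ≥ k / ((T : ℚ) - N2 - jstar))
    (I : Finset ℤ) (hI : I ⊆ Finset.Icc (1 : ℤ) T)
    (hcard : ((Finset.Icc (1 : ℤ) T \ I).card : ℤ) ≤ N2) :
    ∑ i ∈ I, α i ≥ k :=
  stmt_10_general T N1 N2 istar jstar hT hj0 hj1 hij hiT k hk α hsum hub hlb I hI hcard
end

section
/- Let F be a finite field and fix an (N1,N2,T)-achievable (n1,n2,k,T) streaming code over F. Fix t ∈ ℕ, and let e_S, e_R : ℕ → {0,1} be erasure sequences with e_S(t') = 0 and e_R(t') = 0 for all t' outside [t, t+T], satisfying: Σ_{t'=t}^{t+T} e_S(t') ≤ N1; Σ_{t'=t}^{t+T} e_R(t') ≤ N2 if e_S(t) = 0; and Σ_{t'=t+1}^{t+T} e_R(t') ≤ N2 if e_S(t) = 1. Then for any two message sequences m, m' : ℕ → F^k with m(t') = m'(t') for all t' < t, if the induced received sequences satisfy y_D(t') = y'_D(t') for all 0 ≤ t' ≤ t+T, then m(t) = m'(t). (In particular, when e_S(t) = 1, the message m(t) is recoverable even though up to N2 + 1 relay-to-destination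 erasures occur in the window [t, t+T].) -/
/-- An `(n1, n2, k, T)` streaming code over an alphabet `F`:
source encoders, relay encoders and delay-`T` decoders. -/
structure StreamingCode (F : Type*) (n1 n2 k T : ℕ) where
  enc : (t : ℕ) → (Fin (t + 1) → (Fin k → F)) → (Fin n1 → F)
  rel : (t : ℕ) → (Fin (t + 1) → Option (Fin n1 → F)) → (Fin n2 → F)
  dec : (t : ℕ) → (Fin (t + T + 1) → Option (Fin n2 → F)) → (Fin k → F)

namespace StreamingCode

variable {F : Type*} {n1 n2 k T : ℕ}

/-- Source packet at time `t`. -/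
def x (C : StreamingCode F n1 n2 k T) (m : ℕ → Fin k → F) (t : ℕ) : Fin n1 → F :=
  C.enc t (fun i => m i)

/-- Packet received by the relay (with erasures `eS`). -/
def xR (C : StreamingCode F n1 n2 k T) (m : ℕ → Fin k → F) (eS : ℕ → ℕ) (t : ℕ) :
    Option (Fin n1 → F) :=
  if eS t = 1 then none else some (C.x m t)

/-- Relay packet at time `t`. -/
def y (C : StreamingCode F n1 n2 k T) (m : ℕ → Fin k → F) (eS : ℕ → ℕ) (t : ℕ) :
    Fin n2 → F :=
  C.rel t (fun i => C.xR m eS i)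

/-- Packet received by the destination (with erasures `eR`). -/
def yD (C : StreamingCode F n1 n2 k T) (m : ℕ → Fin k → F) (eS eR : ℕ → ℕ) (t : ℕ) :
    Option (Fin n2 → F) :=
  if eR t = 1 then none else some (C.y m eS t)

/-- `(N1, N2, T)`-achievability: every message packet is decoded by its deadline under any
`N1`-erasure sequence on the first link and any `N2`-erasure sequence on the second link. -/
def Achievable (C : StreamingCode F n1 n2 k T) (N1 N2 : ℕ) : Prop :=
  ∀ (m : ℕ → Fin k → F) (eS eR : ℕ → ℕ),
    (∀ t, eS t ≤ 1) → (∀ t, eR t ≤ 1) →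
    (∀ n, ∑ t ∈ Finset.range n, eS t ≤ N1) →
    (∀ n, ∑ t ∈ Finset.range n, eR t ≤ N2) →
    ∀ t, C.dec t (fun i => C.yD m eS eR i) = m t

end StreamingCode

/-!
If the source packet at time `t` reaches the relay, the window `[t, t + T]` carries an admissible
erasure pattern and decodability is immediate. If it is erased, the relay's packet at time `t`
depends only on the source packets before `t`, hence only on the messages before `t`, on which
`m` and `m'` agree. Un-erasing that relay packet therefore keeps the two received sequences equal,
and the new pattern has at most `N2` relay-to-destination erasures, so the decoder applies.
-/

theorem Finset.sum_range_le_of_eq_zero_of_notMem {M : Type*} [AddCommMonoid M]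
    [PartialOrder M] [CanonicallyOrderedAdd M] {f : ℕ → M} {s : Finset ℕ}
    (hf : ∀ i ∉ s, f i = 0) (n : ℕ) : ∑ i ∈ Finset.range n, f i ≤ ∑ i ∈ s, f i :=
  Finset.sum_le_sum_of_ne_zero fun i _ hi => not_imp_comm.mp (hf i) hi

namespace StreamingCode

variable {F : Type*} {n1 n2 k T : ℕ} (C : StreamingCode F n1 n2 k T)
  {m m' : ℕ → Fin k → F} {eS eR : ℕ → ℕ}

theorem x_eq_of_forall_le_eq {j : ℕ} (hm : ∀ i ≤ j, m i = m' i) : C.x m j = C.x m' j := by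
  unfold x
  congr 1
  funext i
  exact hm i (Nat.le_of_lt_succ i.isLt)

theorem y_eq_of_forall_le_xR_eq {t : ℕ} (hx : ∀ i ≤ t, C.xR m eS i = C.xR m' eS i) :
    C.y m eS t = C.y m' eS t := by
  unfold y
  congr 1
  funext i
  exact hx i (Nat.le_of_lt_succ i.isLt)

theorem y_eq_of_source_erased {t : ℕ} (hm : ∀ i < t, m i = m' i) (ht : eS t = 1) :
    C.y m eS t = C.y m' eS t := by
  refine C.y_eq_of_forall_le_xR_eq fun i hi => ?_
  rcases hi.lt_or_eq with hi | rfl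
  · rw [xR, xR, C.x_eq_of_forall_le_eq fun j hj => hm j (hj.trans_lt hi)]
  · simp only [xR, ht, if_true]

theorem yD_update_zero_eq {t i : ℕ} (hy : C.yD m eS eR i = C.yD m' eS eR i)
    (ht : C.y m eS t = C.y m' eS t) :
    C.yD m eS (Function.update eR t 0) i = C.yD m' eS (Function.update eR t 0) i := by
  rcases eq_or_ne i t with rfl | hit
  · simp [yD, ht]
  · simpa only [yD, Function.update_of_ne hit] using hy

theorem eq_of_forall_le_yD_eq {N1 N2 : ℕ} (hC : C.Achievable N1 N2)
    (heS1 : ∀ i, eS i ≤ 1) (heR1 : ∀ i, eR i ≤ 1)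
    (hS : ∀ n, ∑ i ∈ Finset.range n, eS i ≤ N1) (hR : ∀ n, ∑ i ∈ Finset.range n, eR i ≤ N2)
    {t : ℕ} (hy : ∀ i ≤ t + T, C.yD m eS eR i = C.yD m' eS eR i) : m t = m' t := by
  rw [← hC m eS eR heS1 heR1 hS hR t, ← hC m' eS eR heS1 heR1 hS hR t]
  congr 1
  funext i
  exact hy i (Nat.le_of_lt_succ i.isLt)

end StreamingCode

theorem stmt_11_general {F : Type} {N1 N2 T n1 n2 k : ℕ}
    (C : StreamingCode F n1 n2 k T) (hC : C.Achievable N1 N2)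
    (t : ℕ) (eS eR : ℕ → ℕ)
    (heS1 : ∀ t', eS t' ≤ 1) (heR1 : ∀ t', eR t' ≤ 1)
    (hsupS : ∀ t', t' ∉ Finset.Icc t (t + T) → eS t' = 0)
    (hsupR : ∀ t', t' ∉ Finset.Icc t (t + T) → eR t' = 0)
    (h1 : ∑ t' ∈ Finset.Icc t (t + T), eS t' ≤ N1)
    (h2 : eS t = 0 → ∑ t' ∈ Finset.Icc t (t + T), eR t' ≤ N2)
    (h3 : eS t = 1 → ∑ t' ∈ Finset.Icc (t + 1) (t + T), eR t' ≤ N2)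
    (m m' : ℕ → Fin k → F) (hm : ∀ t' < t, m t' = m' t')
    (hy : ∀ t' ≤ t + T, C.yD m eS eR t' = C.yD m' eS eR t') :
    m t = m' t := by
  have hS n := (Finset.sum_range_le_of_eq_zero_of_notMem hsupS n).trans h1
  rcases Nat.le_one_iff_eq_zero_or_eq_one.mp (heS1 t) with hst | hst
  · exact C.eq_of_forall_le_yD_eq hC heS1 heR1 hS
      (fun n => (Finset.sum_range_le_of_eq_zero_of_notMem hsupR n).trans (h2 hst)) hy
  have heR'1 i : Function.update eR t 0 i ≤ 1 := by
    rcases eq_or_ne i t with rfl | hit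
    · simp
    · simpa [Function.update_of_ne hit] using heR1 i
  have hsupR' : ∀ i ∉ Finset.Icc (t + 1) (t + T), Function.update eR t 0 i = 0 := by
    intro i hi
    rcases eq_or_ne i t with rfl | hit
    · simp
    · rw [Function.update_of_ne hit]
      exact hsupR i fun hi' => hi (Finset.mem_Icc.mpr ⟨by grind, (Finset.mem_Icc.mp hi').2⟩)
  have hR n : ∑ i ∈ Finset.range n, Function.update eR t 0 i ≤ N2 := by
    refine (Finset.sum_range_le_of_eq_zero_of_notMem hsupR' n).trans (le_of_eq_of_le ?_ (h3 hst))
    exact Finset.sum_congr rfl fun i hi => Function.update_of_ne (by grind) _ _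
  exact C.eq_of_forall_le_yD_eq hC heS1 heR'1 hS hR fun i hi =>
    C.yD_update_zero_eq (hy i hi) (C.y_eq_of_source_erased hm hst)

theorem stmt_11 {F : Type} [Field F] [Fintype F] {N1 N2 T n1 n2 k : ℕ}
    (C : StreamingCode F n1 n2 k T) (hC : C.Achievable N1 N2)
    (t : ℕ) (eS eR : ℕ → ℕ)
    (heS1 : ∀ t', eS t' ≤ 1) (heR1 : ∀ t', eR t' ≤ 1)
    (hsupS : ∀ t', t' ∉ Finset.Icc t (t + T) → eS t' = 0)
    (hsupR : ∀ t', t' ∉ Finset.Icc t (t + T) → eR t' = 0)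
    (h1 : ∑ t' ∈ Finset.Icc t (t + T), eS t' ≤ N1)
    (h2 : eS t = 0 → ∑ t' ∈ Finset.Icc t (t + T), eR t' ≤ N2)
    (h3 : eS t = 1 → ∑ t' ∈ Finset.Icc (t + 1) (t + T), eR t' ≤ N2)
    (m m' : ℕ → Fin k → F) (hm : ∀ t' < t, m t' = m' t')
    (hy : ∀ t' ≤ t + T, C.yD m eS eR t' = C.yD m' eS eR t') :
    m t = m' t :=
  stmt_11_general C hC t eS eR heS1 heR1 hsupS hsupR h1 h2 h3 m m' hm hy
end

section
/- Let F be any finite field and let N1, N2, T be nonnegative integers with N1 + N2 > T. Then every (N1,N2,T)-achievable (n1,n2,k,T) streaming code over F has k = 0; that is, the (N1,N2,T)-capacity is zero when N1 + N2 > T. -/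
/-
The adversary erases the first `N1` source packets and then the next `N2` relay packets. Up to
time `N1 + N2 - 1 ≥ T` the destination therefore receives nothing that depends on the message,
so the decoder's output `m 0` at the deadline `T` cannot depend on it either; with `k > 0` this
is impossible, since two messages can differ at time `0`.
-/

namespace StreamingCode

variable {F : Type*} {n1 n2 k T : ℕ}

def burst (a n t : ℕ) : ℕ := if t ∈ Finset.Ico a (a + n) then 1 else 0

lemma burst_le_one (a n t : ℕ) : burst a n t ≤ 1 := by
  unfold burst
  split_ifs <;> omega

lemma sum_range_burst_le (a n N : ℕ) : ∑ t ∈ Finset.range N, burst a n t ≤ n := by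
  unfold burst
  rw [Finset.sum_ite_mem, Finset.sum_const, smul_eq_mul, mul_one]
  calc (Finset.range N ∩ Finset.Ico a (a + n)).card
      ≤ (Finset.Ico a (a + n)).card := Finset.card_le_card Finset.inter_subset_right
    _ = n := by simp

lemma y_eq_of_source_erased_s16 (C : StreamingCode F n1 n2 k T) (m m' : ℕ → Fin k → F)
    {eS : ℕ → ℕ} {t : ℕ} (h : ∀ j ≤ t, eS j = 1) : C.y m eS t = C.y m' eS t := by
  unfold y
  congr 1
  funext j
  simp [xR, h j (Nat.lt_succ_iff.mp j.isLt)]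

lemma yD_eq_of_relay_erased (C : StreamingCode F n1 n2 k T) (m m' : ℕ → Fin k → F)
    (eS : ℕ → ℕ) {eR : ℕ → ℕ} {t : ℕ} (h : eR t = 1) :
    C.yD m eS eR t = C.yD m' eS eR t := by
  simp [yD, h]

lemma yD_burst_eq_of_lt (C : StreamingCode F n1 n2 k T) (m m' : ℕ → Fin k → F)
    {N1 N2 t : ℕ} (ht : t < N1 + N2) :
    C.yD m (burst 0 N1) (burst N1 N2) t = C.yD m' (burst 0 N1) (burst N1 N2) t := by
  by_cases htN1 : t < N1
  · have hS : ∀ j ≤ t, burst 0 N1 j = 1 := fun j hj => by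
      simp only [burst, Finset.mem_Ico]
      split_ifs <;> omega
    simp only [yD, y_eq_of_source_erased_s16 C m m' hS]
  · exact yD_eq_of_relay_erased C m m' _ (by simp only [burst, Finset.mem_Ico]; split_ifs <;> omega)

theorem Achievable.eq_of_lt_add {C : StreamingCode F n1 n2 k T} {N1 N2 : ℕ}
    (hC : C.Achievable N1 N2) (h : T < N1 + N2) (m m' : ℕ → Fin k → F) : m 0 = m' 0 := by
  have decode := fun m => hC m (burst 0 N1) (burst N1 N2) (burst_le_one 0 N1)
    (burst_le_one N1 N2) (sum_range_burst_le 0 N1) (sum_range_burst_le N1 N2) 0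
  rw [← decode m, ← decode m']
  congr 1
  funext i
  exact yD_burst_eq_of_lt C m m' (by omega)

end StreamingCode

theorem stmt_16_general {F : Type} [Field F] (N1 N2 T n1 n2 k : ℕ)
    (h : T < N1 + N2) (C : StreamingCode F n1 n2 k T) (hC : C.Achievable N1 N2) :
    k = 0 := by
  by_contra hk
  have h01 := hC.eq_of_lt_add h (fun _ _ => 0) (fun _ _ => 1)
  exact zero_ne_one (congrFun h01 ⟨0, Nat.pos_of_ne_zero hk⟩)

theorem stmt_16 {F : Type} [Field F] [Fintype F] (N1 N2 T n1 n2 k : ℕ)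
    (h : T < N1 + N2) (C : StreamingCode F n1 n2 k T) (hC : C.Achievable N1 N2) :
    k = 0 :=
  stmt_16_general N1 N2 T n1 n2 k h C hC
end
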